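/- Let λ ≥ 0 and τ > 0. Then |1 - e^{-τλ} - τλ| ≤ (1/2)τ²λ². Consequently, for φ ∈ H¹ (periodic setting, with Δ the periodic Laplacian), (1/(2τ))(‖φ‖₂² - ‖e^{(τ/2)Δ}φ‖₂²) converges to (1/2)‖∇φ‖₂² as τ → 0. -/

import Mathlib

open Real Filter

/-- `e^{-x} ≤ 1 - x + x²/2` for `x ≥ 0`. -/
lemma aux_exp_neg_le (x : ℝ) (hx : 0 ≤ x) : Real.exp (-x) ≤ 1 - x + x ^ 2 / 2 := by
  set f : ℝ → ℝ := fun y => 1 - y + y ^ 2 / 2 - Real.exp (-y) with hf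
  have hderiv : ∀ y : ℝ, HasDerivAt f (-1 + y + Real.exp (-y)) y := by
    intro y
    have h1 : HasDerivAt (fun y : ℝ => Real.exp (-y)) (-Real.exp (-y)) y := by
      simpa [Function.comp_def] using (Real.hasDerivAt_exp (-y)).comp y (hasDerivAt_neg y)
    have h2 : HasDerivAt (fun y : ℝ => 1 - y + y ^ 2 / 2) (-1 + y) y := by
      have : HasDerivAt (fun y : ℝ => y ^ 2 / 2) y y := by
        simpa using (hasDerivAt_pow 2 y).div_const 2
      simpa [Pi.add_def, Pi.sub_def] using (((hasDerivAt_const y (1:ℝ)).sub (hasDerivAt_id y)).add this)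
    simpa [hf, sub_eq_add_neg, Pi.add_def, Pi.neg_def] using h2.sub h1
  have hmono : MonotoneOn f (Set.Ici (0:ℝ)) := by
    apply monotoneOn_of_deriv_nonneg (convex_Ici 0)
      (fun y _ => (hderiv y).continuousAt.continuousWithinAt)
      (fun y _ => (hderiv y).differentiableAt.differentiableWithinAt)
    intro y hy
    rw [interior_Ici] at hy
    rw [(hderiv y).deriv]
    have : 1 - y ≤ Real.exp (-y) := by
      have := Real.add_one_le_exp (-y); linarith
    linarith
  have h0 : f 0 = 0 := by simp [hf]
  have := hmono (Set.self_mem_Ici) (Set.mem_Ici.mpr hx) hx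
  rw [h0] at this
  simp only [hf] at this
  linarith

/-- The scalar bound. -/
lemma aux_scalar (lam τ : ℝ) (hlam : 0 ≤ lam) (hτ : 0 < τ) :
    |1 - Real.exp (-τ * lam) - τ * lam| ≤ (1 / 2) * τ ^ 2 * lam ^ 2 := by
  have key : ∀ x : ℝ, 0 ≤ x → |1 - Real.exp (-x) - x| ≤ (1 / 2) * x ^ 2 := by
    intro x hx0
    have h1 : 1 - x ≤ Real.exp (-x) := by
      have := Real.add_one_le_exp (-x); linarith
    have h2 : Real.exp (-x) ≤ 1 - x + x ^ 2 / 2 := aux_exp_neg_le x hx0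
    rw [abs_le]; constructor <;> nlinarith [sq_nonneg x]
  have := key (τ * lam) (mul_nonneg hτ.le hlam)
  calc |1 - Real.exp (-τ * lam) - τ * lam|
      = |1 - Real.exp (-(τ * lam)) - τ * lam| := by rw [neg_mul]
    _ ≤ (1 / 2) * (τ * lam) ^ 2 := this
    _ = (1 / 2) * τ ^ 2 * lam ^ 2 := by ring

/-- The scalar bound `|1 - e^{-τλ} - τλ| ≤ (1/2)τ²λ²`, and the spectral convergence of the
first-order relaxed kinetic energy to `(1/2)‖∇φ‖²` as `τ → 0⁺` for `φ ∈ H¹`. -/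
theorem stmt12 :
    (∀ lam τ : ℝ, 0 ≤ lam → 0 < τ →
      |1 - Real.exp (-τ * lam) - τ * lam| ≤ (1 / 2) * τ ^ 2 * lam ^ 2) ∧
    ∀ (lam : ℕ → ℝ) (c : ℕ → ℂ), (∀ k, 0 ≤ lam k) →
      Summable (fun k => ‖c k‖ ^ 2) →
      Summable (fun k => lam k * ‖c k‖ ^ 2) →
      Filter.Tendsto
        (fun τ : ℝ =>
          (1 / (2 * τ)) * ((∑' k, ‖c k‖ ^ 2) - ∑' k, Real.exp (-τ * lam k) * ‖c k‖ ^ 2))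
        (nhdsWithin 0 (Set.Ioi 0))
        (nhds ((1 / 2) * ∑' k, lam k * ‖c k‖ ^ 2)) := by
  refine ⟨aux_scalar, ?_⟩
  intro lam c hlam hsum1 hsum2
  -- summability of the heat-semigroup terms for τ > 0
  have hsumexp : ∀ τ : ℝ, 0 < τ → Summable (fun k => Real.exp (-τ * lam k) * ‖c k‖ ^ 2) := by
    intro τ hτ
    apply Summable.of_nonneg_of_le (fun k => mul_nonneg (Real.exp_pos _).le (by positivity))
      (fun k => ?_) hsum1
    have : Real.exp (-τ * lam k) ≤ 1 := Real.exp_le_one_iff.mpr (by nlinarith [hlam k])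
    nlinarith [sq_nonneg ‖c k‖, norm_nonneg (c k)]
  -- rewrite the target limit as a tsum
  have hL : (1 / 2) * ∑' k, lam k * ‖c k‖ ^ 2
      = ∑' k, (1 / 2) * (lam k * ‖c k‖ ^ 2) := (tsum_mul_left).symm
  rw [hL]
  -- rewrite the function as a tsum, eventually on (0, ∞)
  have hcongr : ∀ᶠ τ in nhdsWithin (0:ℝ) (Set.Ioi 0),
      (1 / (2 * τ)) * ((∑' k, ‖c k‖ ^ 2) - ∑' k, Real.exp (-τ * lam k) * ‖c k‖ ^ 2)
        = ∑' k, (1 / (2 * τ)) * ((1 - Real.exp (-τ * lam k)) * ‖c k‖ ^ 2) := by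
    filter_upwards [self_mem_nhdsWithin] with τ hτ
    rw [← Summable.tsum_sub hsum1 (hsumexp τ hτ), ← tsum_mul_left]
    congr 1; funext k; ring
  rw [tendsto_congr' hcongr]
  -- dominated convergence
  apply tendsto_tsum_of_dominated_convergence (bound := fun k => (1 / 2) * (lam k * ‖c k‖ ^ 2))
    (hsum2.mul_left _)
  · -- pointwise convergence
    intro k
    rw [tendsto_iff_dist_tendsto_zero]
    have hb : Tendsto (fun τ : ℝ => τ * ((1/4) * lam k ^ 2 * ‖c k‖ ^ 2))
        (nhdsWithin (0:ℝ) (Set.Ioi 0)) (nhds 0) := by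
      have : Tendsto (fun τ : ℝ => τ * ((1/4) * lam k ^ 2 * ‖c k‖ ^ 2)) (nhds 0)
          (nhds (0 * ((1/4) * lam k ^ 2 * ‖c k‖ ^ 2))) :=
        (tendsto_id).mul_const _
      rw [zero_mul] at this
      exact this.mono_left nhdsWithin_le_nhds
    apply squeeze_zero' (Eventually.of_forall (fun τ => dist_nonneg)) ?_ hb
    filter_upwards [self_mem_nhdsWithin] with τ hτ
    have hτ : (0:ℝ) < τ := hτ
    rw [Real.dist_eq]
    have key := aux_scalar (lam k) τ (hlam k) hτ
    have : |1 / (2 * τ) * ((1 - Real.exp (-τ * lam k)) * ‖c k‖ ^ 2)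
        - 1 / 2 * (lam k * ‖c k‖ ^ 2)|
        = (1 / (2 * τ)) * |1 - Real.exp (-τ * lam k) - τ * lam k| * ‖c k‖ ^ 2 := by
      rw [show 1 / (2 * τ) * ((1 - Real.exp (-τ * lam k)) * ‖c k‖ ^ 2)
          - 1 / 2 * (lam k * ‖c k‖ ^ 2)
          = (1 / (2 * τ)) * ((1 - Real.exp (-τ * lam k) - τ * lam k) * ‖c k‖ ^ 2) by
        field_simp]
      rw [abs_mul, abs_mul, abs_of_nonneg (by positivity : (0:ℝ) ≤ 1 / (2 * τ)),
        abs_of_nonneg (by positivity : (0:ℝ) ≤ ‖c k‖ ^ 2), mul_assoc]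
    rw [this]
    calc (1 / (2 * τ)) * |1 - Real.exp (-τ * lam k) - τ * lam k| * ‖c k‖ ^ 2
        ≤ (1 / (2 * τ)) * ((1 / 2) * τ ^ 2 * lam k ^ 2) * ‖c k‖ ^ 2 := by
          have h1 : (0:ℝ) ≤ 1 / (2 * τ) := by positivity
          have h2 : (0:ℝ) ≤ ‖c k‖ ^ 2 := by positivity
          exact mul_le_mul_of_nonneg_right (mul_le_mul_of_nonneg_left key h1) h2
      _ = τ * ((1/4) * lam k ^ 2 * ‖c k‖ ^ 2) := by field_simp; ring
  · -- domination
    filter_upwards [self_mem_nhdsWithin] with τ hτ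
    intro k
    have hτ : (0:ℝ) < τ := hτ
    have h1 : Real.exp (-τ * lam k) ≤ 1 := Real.exp_le_one_iff.mpr (by nlinarith [hlam k])
    have h2 : 1 - τ * lam k ≤ Real.exp (-τ * lam k) := by
      have := Real.add_one_le_exp (-τ * lam k); linarith
    have hc : (0:ℝ) ≤ ‖c k‖ ^ 2 := by positivity
    have hnn : (0:ℝ) ≤ 1 / (2 * τ) * ((1 - Real.exp (-τ * lam k)) * ‖c k‖ ^ 2) := by
      apply mul_nonneg (by positivity)
      exact mul_nonneg (by linarith) hc
    rw [Real.norm_eq_abs, abs_of_nonneg hnn]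
    have hstep : 1 / (2 * τ) * ((1 - Real.exp (-τ * lam k)) * ‖c k‖ ^ 2)
        ≤ 1 / (2 * τ) * (τ * lam k * ‖c k‖ ^ 2) := by
      apply mul_le_mul_of_nonneg_left _ (by positivity)
      exact mul_le_mul_of_nonneg_right (by linarith) hc
    calc 1 / (2 * τ) * ((1 - Real.exp (-τ * lam k)) * ‖c k‖ ^ 2)
        ≤ 1 / (2 * τ) * (τ * lam k * ‖c k‖ ^ 2) := hstep
      _ = 1 / 2 * (lam k * ‖c k‖ ^ 2) := by field_simp
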